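/- arXiv:2306.04761 — 5 statements merged into one kernel-verified Lean document; each statement's English description precedes it below -/
import Mathlib

section
/- Let α(x,y) = Σ_{i=1}^n x_i² and β(x,y) = Σ_{i=1}^k x_i² + Σ_{i=k+1}^n y_i² on ℂⁿ = ℝⁿ_x ⊕ iℝⁿ_y, with 0 ≤ k ≤ n. Then the function αβ is weakly plurisubharmonic on ℂⁿ, i.e., the complex Hessian (∂²(αβ)/∂z_i∂z̄_j) is positive semidefinite everywhere. -/
/-!
Both `α` and `β` are sums of squares of real coordinate functionals, one of `xᵢ, yᵢ` for each
`i`, so their Levi forms are both `2‖v‖²`. The Leibniz rule for the Levi form gives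
`levi (αβ) = 2 (α + β) ‖v‖² + 2 (Dα(v) Dβ(v) + Dα(iv) Dβ(iv))`. The two derivatives differ only in
the last `n - k` coordinates: `Dα − Dβ = 2 Re ⟪w, ·⟫` with `w = (0, …, 0, z̄ₖ₊₁, …, z̄ₙ)`. Since
`4ab ≥ -(a - b)²`, the cross term is at least `-|⟪w, v⟫|² ≥ -‖w‖² ‖v‖² ≥ -(α + β) ‖v‖²`
by Cauchy–Schwarz.
-/

noncomputable section

/-- ℂⁿ as a real inner product space. -/
abbrev Cn (n : ℕ) := EuclideanSpace ℂ (Fin n)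

/-- α(x,y) = Σ xᵢ², the squared distance to L₁ = iℝⁿ. -/
def alph (n : ℕ) (z : Cn n) : ℝ := ∑ i, (z i).re ^ 2

/-- β(x,y) = Σ_{i≤k} xᵢ² + Σ_{i>k} yᵢ² (0-based: i < k resp. k ≤ i). -/
def bet (n k : ℕ) (z : Cn n) : ℝ :=
  ∑ i : Fin n, if (i : ℕ) < k then (z i).re ^ 2 else (z i).im ^ 2

/-- The Levi quadratic form of a real function `f` at `z` on the (real) vector `v`:
`dd^c f(v, iv) = Hess f(v,v) + Hess f(iv,iv)`.  Weak plurisubharmonicity of `f` at `z`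
(positive semidefiniteness of the complex Hessian `(∂²f/∂zᵢ∂z̄ⱼ)`) is equivalent to
`0 ≤ levi n f z v` for all `v`. -/
def levi (n : ℕ) (f : Cn n → ℝ) (z v : Cn n) : ℝ :=
  iteratedFDeriv ℝ 2 f z ![v, v] + iteratedFDeriv ℝ 2 f z ![Complex.I • v, Complex.I • v]

/-- The symmetric bilinear form `dd^c f(·, i·)(v,w) = Hess f(v,w) + Hess f(iv,iw)`,
whose matrix in the standard real basis of ℝ²ⁿ is `M₀`. -/
def leviB (n : ℕ) (f : Cn n → ℝ) (z v w : Cn n) : ℝ :=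
  iteratedFDeriv ℝ 2 f z ![v, w] + iteratedFDeriv ℝ 2 f z ![Complex.I • v, Complex.I • w]

open Complex ComplexConjugate

section QuadraticHessian

variable {E : Type*} [NormedAddCommGroup E] [NormedSpace ℝ E]

theorem iteratedFDeriv_two_apply_of_hasFDerivAt_clm {f : E → ℝ} {F : E →L[ℝ] E →L[ℝ] ℝ}
    (hf : ∀ z, HasFDerivAt f (F z) z) (z v w : E) :
    iteratedFDeriv ℝ 2 f z ![v, w] = F v w := by
  rw [iteratedFDeriv_two_apply, funext fun y => (hf y).fderiv, F.fderiv]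
  rfl

theorem iteratedFDeriv_two_mul_apply_of_hasFDerivAt_clm {f g : E → ℝ}
    {F G : E →L[ℝ] E →L[ℝ] ℝ} (hf : ∀ z, HasFDerivAt f (F z) z)
    (hg : ∀ z, HasFDerivAt g (G z) z) (z v w : E) :
    iteratedFDeriv ℝ 2 (fun x => f x * g x) z ![v, w] =
      f z * G v w + g z * F v w + F z v * G z w + G z v * F z w := by
  have hfg : fderiv ℝ (fun x => f x * g x) = fun y => f y • G y + g y • F y :=
    funext fun y => ((hf y).mul (hg y)).fderiv
  have h2 : HasFDerivAt (fun y => f y • G y + g y • F y)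
      (f z • G + (F z).smulRight (G z) + (g z • F + (G z).smulRight (F z))) z :=
    ((hf z).smul G.hasFDerivAt).add ((hg z).smul F.hasFDerivAt)
  rw [iteratedFDeriv_two_apply, hfg, h2.fderiv]
  simp only [Matrix.cons_val_zero, Matrix.cons_val_one, Matrix.cons_val_fin_one, add_apply,
    smul_apply, ContinuousLinearMap.smulRight_apply, smul_eq_mul]
  ring

variable {ι : Type*} [Fintype ι]

def sumSqDeriv (φ : ι → E →L[ℝ] ℝ) : E →L[ℝ] E →L[ℝ] ℝ :=
  ∑ i, (2 • φ i).smulRight (φ i)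

theorem sumSqDeriv_apply (φ : ι → E →L[ℝ] ℝ) (u w : E) :
    sumSqDeriv φ u w = 2 * ∑ i, φ i u * φ i w := by
  simp [sumSqDeriv, Finset.mul_sum, mul_assoc]

theorem hasFDerivAt_sum_sq (φ : ι → E →L[ℝ] ℝ) (z : E) :
    HasFDerivAt (fun w => ∑ i, φ i w ^ 2) (sumSqDeriv φ z) z := by
  refine (HasFDerivAt.fun_sum (u := Finset.univ) fun i _ =>
    ((φ i).hasFDerivAt (x := z)).pow 2).congr_fderiv ?_
  ext v
  simp [sumSqDeriv]

end QuadraticHessian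

section Levi

variable {n : ℕ}

theorem levi_of_hasFDerivAt_clm {f : Cn n → ℝ} {F : Cn n →L[ℝ] Cn n →L[ℝ] ℝ}
    (hf : ∀ z, HasFDerivAt f (F z) z) (z v : Cn n) :
    levi n f z v = F v v + F (I • v) (I • v) := by
  simp only [levi, iteratedFDeriv_two_apply_of_hasFDerivAt_clm hf]

theorem levi_mul_of_hasFDerivAt_clm {f g : Cn n → ℝ} {F G : Cn n →L[ℝ] Cn n →L[ℝ] ℝ}
    (hf : ∀ z, HasFDerivAt f (F z) z) (hg : ∀ z, HasFDerivAt g (G z) z) (z v : Cn n) :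
    levi n (fun x => f x * g x) z v = f z * levi n g z v + g z * levi n f z v
      + 2 * (F z v * G z v + F z (I • v) * G z (I • v)) := by
  simp only [levi, iteratedFDeriv_two_mul_apply_of_hasFDerivAt_clm hf hg,
    iteratedFDeriv_two_apply_of_hasFDerivAt_clm hf, iteratedFDeriv_two_apply_of_hasFDerivAt_clm hg]
  ring

theorem levi_sum_sq {φ : Fin n → Cn n →L[ℝ] ℝ}
    (hφ : ∀ i v, φ i v ^ 2 + φ i (I • v) ^ 2 = ‖v i‖ ^ 2) (z v : Cn n) :
    levi n (fun w => ∑ i, φ i w ^ 2) z v = 2 * ‖v‖ ^ 2 := by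
  rw [levi_of_hasFDerivAt_clm (hasFDerivAt_sum_sq φ), sumSqDeriv_apply, sumSqDeriv_apply,
    EuclideanSpace.norm_sq_eq, ← mul_add, ← Finset.sum_add_distrib]
  simp only [← sq, hφ]

def reCoord (n : ℕ) (i : Fin n) : Cn n →L[ℝ] ℝ :=
  reCLM.comp ((EuclideanSpace.proj i).restrictScalars ℝ)

def imCoord (n : ℕ) (i : Fin n) : Cn n →L[ℝ] ℝ :=
  imCLM.comp ((EuclideanSpace.proj i).restrictScalars ℝ)

def betCoord (n k : ℕ) (i : Fin n) : Cn n →L[ℝ] ℝ :=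
  if (i : ℕ) < k then reCoord n i else imCoord n i

@[simp] theorem reCoord_apply (i : Fin n) (v : Cn n) : reCoord n i v = (v i).re := rfl

theorem betCoord_apply (k : ℕ) (i : Fin n) (v : Cn n) :
    betCoord n k i v = if (i : ℕ) < k then (v i).re else (v i).im := by
  unfold betCoord; split <;> rfl

theorem alph_eq_sum_sq : alph n = fun w => ∑ i, reCoord n i w ^ 2 := rfl

theorem bet_eq_sum_sq (k : ℕ) : bet n k = fun w => ∑ i, betCoord n k i w ^ 2 :=
  funext fun w => Finset.sum_congr rfl fun i _ => by rw [betCoord_apply]; split <;> rfl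

theorem reCoord_sq_add_reCoord_I_smul_sq (i : Fin n) (v : Cn n) :
    reCoord n i v ^ 2 + reCoord n i (I • v) ^ 2 = ‖v i‖ ^ 2 := by
  simp only [reCoord_apply, PiLp.smul_apply, smul_eq_mul, I_mul_re, Complex.sq_norm, normSq_apply]
  ring

theorem betCoord_sq_add_betCoord_I_smul_sq (k : ℕ) (i : Fin n) (v : Cn n) :
    betCoord n k i v ^ 2 + betCoord n k i (I • v) ^ 2 = ‖v i‖ ^ 2 := by
  simp only [betCoord_apply, PiLp.smul_apply, smul_eq_mul, I_mul_re, I_mul_im, Complex.sq_norm,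
    normSq_apply]
  split <;> ring

theorem hasFDerivAt_alph (z : Cn n) : HasFDerivAt (alph n) (sumSqDeriv (reCoord n) z) z :=
  hasFDerivAt_sum_sq (reCoord n) z

theorem hasFDerivAt_bet (k : ℕ) (z : Cn n) :
    HasFDerivAt (bet n k) (sumSqDeriv (betCoord n k) z) z :=
  bet_eq_sum_sq k ▸ hasFDerivAt_sum_sq (betCoord n k) z

theorem levi_alph (z v : Cn n) : levi n (alph n) z v = 2 * ‖v‖ ^ 2 := by
  rw [alph_eq_sum_sq, levi_sum_sq reCoord_sq_add_reCoord_I_smul_sq]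

theorem levi_bet (k : ℕ) (z v : Cn n) : levi n (bet n k) z v = 2 * ‖v‖ ^ 2 := by
  rw [bet_eq_sum_sq, levi_sum_sq (betCoord_sq_add_betCoord_I_smul_sq k)]

end Levi

theorem neg_sq_add_sq_le_mul_add_mul {a b a' b' r s : ℝ} (h : a - b = 2 * r)
    (h' : a' - b' = 2 * s) : -(r ^ 2 + s ^ 2) ≤ a * b + a' * b' := by
  obtain rfl : a = b + 2 * r := by linarith
  obtain rfl : a' = b' + 2 * s := by linarith
  nlinarith [sq_nonneg (b + r), sq_nonneg (b' + s)]

section CrossTerm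

variable {n : ℕ} (k : ℕ)

def tailConj (z : Cn n) : Cn n :=
  WithLp.toLp 2 fun i => if (i : ℕ) < k then 0 else conj (z i)

theorem sumSqDeriv_reCoord_sub_sumSqDeriv_betCoord (z v : Cn n) :
    sumSqDeriv (reCoord n) z v - sumSqDeriv (betCoord n k) z v =
      2 * (inner ℂ (tailConj k z) v).re := by
  simp only [sumSqDeriv_apply, ← mul_sub, ← Finset.sum_sub_distrib, PiLp.inner_apply, re_sum]
  congr 1
  refine Finset.sum_congr rfl fun i _ => ?_
  simp only [reCoord_apply, betCoord_apply, tailConj, RCLike.inner_apply]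
  split
  · simp
  · simp only [conj_conj, mul_re]
    ring

theorem norm_tailConj_sq_le (z : Cn n) : ‖tailConj k z‖ ^ 2 ≤ alph n z + bet n k z := by
  rw [EuclideanSpace.norm_sq_eq, alph, bet, ← Finset.sum_add_distrib]
  refine Finset.sum_le_sum fun i _ => ?_
  simp only [tailConj]
  split
  · rw [norm_zero, zero_pow two_ne_zero]; positivity
  · rw [RCLike.norm_conj, Complex.sq_norm, normSq_apply]
    nlinarith [sq_nonneg (z i).re]

theorem neg_le_sumSqDeriv_mul_add (z v : Cn n) :
    -((alph n z + bet n k z) * ‖v‖ ^ 2) ≤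
      sumSqDeriv (reCoord n) z v * sumSqDeriv (betCoord n k) z v
        + sumSqDeriv (reCoord n) z (I • v) * sumSqDeriv (betCoord n k) z (I • v) := by
  have hv := sumSqDeriv_reCoord_sub_sumSqDeriv_betCoord k z v
  have hIv := sumSqDeriv_reCoord_sub_sumSqDeriv_betCoord k z (I • v)
  rw [inner_smul_right, I_mul_re] at hIv
  have hc : ‖inner ℂ (tailConj k z) v‖ ^ 2 ≤ (alph n z + bet n k z) * ‖v‖ ^ 2 :=
    calc ‖inner ℂ (tailConj k z) v‖ ^ 2 ≤ (‖tailConj k z‖ * ‖v‖) ^ 2 := by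
          gcongr; exact norm_inner_le_norm _ _
      _ ≤ (alph n z + bet n k z) * ‖v‖ ^ 2 := by
          rw [mul_pow]; gcongr; exact norm_tailConj_sq_le k z
  have hnorm : ‖inner ℂ (tailConj k z) v‖ ^ 2 =
      (inner ℂ (tailConj k z) v).re ^ 2 + (-(inner ℂ (tailConj k z) v).im) ^ 2 := by
    rw [Complex.sq_norm, Complex.normSq_apply]; ring
  linarith [neg_sq_add_sq_le_mul_add_mul hv hIv]

end CrossTerm

theorem product_weakly_psh_general (n k : ℕ) (z v : Cn n) :
    0 ≤ levi n (fun w => alph n w * bet n k w) z v := by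
  rw [levi_mul_of_hasFDerivAt_clm hasFDerivAt_alph (hasFDerivAt_bet k), levi_alph, levi_bet]
  linarith [neg_le_sumSqDeriv_mul_add k z v]

/-- the function αβ is weakly plurisubharmonic on all of ℂⁿ. -/
theorem product_weakly_psh (n k : ℕ) (hk : k ≤ n) (z v : Cn n) :
    0 ≤ levi n (fun w => alph n w * bet n k w) z v :=
  product_weakly_psh_general n k z v
end
end

section
/- With α = Σ_{i=1}^n x_i² and β = Σ_{i=1}^k x_i² + Σ_{i=k+1}^n y_i² on ℂⁿ, the function √(αβ) is weakly plurisubharmonic on ℂⁿ ∖ (L₁ ∪ L₂), where L₁ = {α = 0} and L₂ = {β = 0}. -/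
noncomputable section

/-!
Write `α = ‖P w‖²` and `β = ‖Q w‖²`, where `P` and `Q` are the real orthogonal projections of `ℂⁿ`
onto `ℝⁿ` and onto `ℝᵏ × (iℝ)ⁿ⁻ᵏ`; then `‖P v‖² + ‖P (i v)‖² = ‖v‖²`, and likewise for `Q`.
With `a = α z`, `b = β z`, the Levi form of `√(αβ)` at `z` on `v` is
`(ab(a + b)‖v‖² - ⟪L, v⟫² - ⟪L, i v⟫²) / (ab)^(3/2)` for `L = b P z - a Q z`.
As `v ⊥ i v`, Bessel's inequality bounds the subtracted terms by
`‖L‖² ‖v‖² = (ab(a + b) - 2ab ⟪P z, Q z⟫) ‖v‖²`, and `⟪P z, Q z⟫ = ∑_{i < k} xᵢ² ≥ 0`.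
-/

open ContinuousLinearMap Filter Topology Complex
open scoped RealInnerProductSpace

section Hessian

variable {E : Type*} [NormedAddCommGroup E] [NormedSpace ℝ E]

def HasHessianAt (f : E → ℝ) (f' : E → E →L[ℝ] ℝ) (f'' : E →L[ℝ] E →L[ℝ] ℝ) (z : E) : Prop :=
  (∀ᶠ w in 𝓝 z, HasFDerivAt f (f' w) w) ∧ HasFDerivAt f' f'' z

variable {f g : E → ℝ} {f' g' : E → E →L[ℝ] ℝ} {f'' g'' : E →L[ℝ] E →L[ℝ] ℝ} {z : E}

theorem HasHessianAt.iteratedFDeriv_two_apply (hf : HasHessianAt f f' f'' z) (u w : E) :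
    iteratedFDeriv ℝ 2 f z ![u, w] = f'' u w := by
  have hfd : fderiv ℝ f =ᶠ[𝓝 z] f' := hf.1.mono fun _ h => h.fderiv
  rw [_root_.iteratedFDeriv_two_apply, hfd.fderiv_eq, hf.2.fderiv]
  rfl

theorem HasHessianAt.mul (hf : HasHessianAt f f' f'' z) (hg : HasHessianAt g g' g'' z) :
    HasHessianAt (fun w => f w * g w) (fun w => f w • g' w + g w • f' w)
      (f z • g'' + (f' z).smulRight (g' z) + (g z • f'' + (g' z).smulRight (f' z))) z :=
  ⟨(hf.1.and hg.1).mono fun _ h => h.1.mul h.2,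
    (hf.1.self_of_nhds.fun_smul hg.2).add (hg.1.self_of_nhds.fun_smul hf.2)⟩

theorem HasHessianAt.sqrt (hf : HasHessianAt f f' f'' z) (hz : 0 < f z) :
    HasHessianAt (fun w => √(f w)) (fun w => (2 * √(f w))⁻¹ • f' w)
      ((2 * √(f z))⁻¹ • f'' - (4 * f z * √(f z))⁻¹ • (f' z).smulRight (f' z)) z := by
  have hpos : ∀ᶠ w in 𝓝 z, 0 < f w :=
    continuousAt_const.eventually_lt hf.1.self_of_nhds.continuousAt hz
  refine ⟨(hf.1.and hpos).mono fun w h => ?_, ?_⟩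
  · refine ((Real.hasDerivAt_sqrt h.2.ne').comp_hasFDerivAt w h.1).congr_fderiv ?_
    simp [one_div]
  · have hinv : HasDerivAt (fun t => (2 * √t)⁻¹) (-(4 * f z * √(f z))⁻¹) (f z) := by
      refine (((Real.hasDerivAt_sqrt hz.ne').const_mul 2).inv (by positivity)).congr_deriv ?_
      field_simp
      rw [Real.sq_sqrt hz.le]
      ring
    refine ((hinv.comp_hasFDerivAt z hf.1.self_of_nhds).fun_smul hf.2).congr_fderiv ?_
    ext u w
    simp only [Function.comp_apply, sub_apply, add_apply, smul_apply, smulRight_apply, smul_eq_mul]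
    ring

end Hessian

section InnerProductSpace

variable {E : Type*} [NormedAddCommGroup E] [InnerProductSpace ℝ E]

theorem hasHessianAt_norm_sq_comp (P : E →L[ℝ] E) (z : E) :
    HasHessianAt (fun w => ‖P w‖ ^ 2)
      (((2 : ℝ) • (innerSL ℝ).bilinearComp P P : E →L[ℝ] E →L[ℝ] ℝ))
      ((2 : ℝ) • (innerSL ℝ).bilinearComp P P) z := by
  refine ⟨Eventually.of_forall fun w => ?_, ((2 : ℝ) • (innerSL ℝ).bilinearComp P P).hasFDerivAt⟩
  convert P.hasFDerivAt.norm_sq using 1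
  ext
  simp

theorem inner_sq_add_inner_sq_le (L u w : E) (huw : ⟪u, w⟫ = 0) (hw : ‖w‖ = ‖u‖) :
    ⟪L, u⟫ ^ 2 + ⟪L, w⟫ ^ 2 ≤ ‖L‖ ^ 2 * ‖u‖ ^ 2 := by
  rcases eq_or_ne u 0 with rfl | hu
  · simp [norm_eq_zero.1 (hw.trans norm_zero)]
  have hu2 : 0 < ‖u‖ ^ 2 := by positivity
  have h := real_inner_self_nonneg (x := ‖u‖ ^ 2 • L - ⟪L, u⟫ • u - ⟪L, w⟫ • w)
  simp only [inner_sub_left, inner_sub_right, real_inner_smul_left, real_inner_smul_right,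
    real_inner_self_eq_norm_sq, real_inner_comm L u, real_inner_comm L w, real_inner_comm u w, huw,
    norm_smul, mul_pow, Real.norm_eq_abs, sq_abs, hw] at h
  nlinarith

theorem sq_add_sq_le_of_inner_nonneg (x y u w : E) (hxy : 0 ≤ ⟪x, y⟫) (huw : ⟪u, w⟫ = 0)
    (hw : ‖w‖ = ‖u‖) :
    (‖y‖ ^ 2 * ⟪x, u⟫ - ‖x‖ ^ 2 * ⟪y, u⟫) ^ 2 + (‖y‖ ^ 2 * ⟪x, w⟫ - ‖x‖ ^ 2 * ⟪y, w⟫) ^ 2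
      ≤ ‖x‖ ^ 2 * ‖y‖ ^ 2 * (‖x‖ ^ 2 + ‖y‖ ^ 2) * ‖u‖ ^ 2 := by
  have hL := inner_sq_add_inner_sq_le (‖y‖ ^ 2 • x - ‖x‖ ^ 2 • y) u w huw hw
  have hnorm :
      ‖‖y‖ ^ 2 • x - ‖x‖ ^ 2 • y‖ ^ 2 ≤ ‖x‖ ^ 2 * ‖y‖ ^ 2 * (‖x‖ ^ 2 + ‖y‖ ^ 2) := by
    rw [norm_sub_sq_real, norm_smul, norm_smul, real_inner_smul_left, real_inner_smul_right]
    simp only [Real.norm_eq_abs, abs_pow, abs_norm]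
    nlinarith [mul_nonneg (mul_nonneg (sq_nonneg ‖x‖) (sq_nonneg ‖y‖)) hxy]
  simp only [inner_sub_left, real_inner_smul_left] at hL
  exact hL.trans (mul_le_mul_of_nonneg_right hnorm (by positivity))

theorem levi_sqrt_mul_norm_sq_nonneg (P Q : E →L[ℝ] E) (hP : ∀ u v, ⟪P u, P v⟫ = ⟪P u, v⟫)
    (hQ : ∀ u v, ⟪Q u, Q v⟫ = ⟪Q u, v⟫) {z : E} (hPz : P z ≠ 0) (hQz : Q z ≠ 0)
    (hPQ : 0 ≤ ⟪P z, Q z⟫) {u w : E} (huw : ⟪u, w⟫ = 0) (hw : ‖w‖ = ‖u‖)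
    (hPuw : ‖P u‖ ^ 2 + ‖P w‖ ^ 2 = ‖u‖ ^ 2) (hQuw : ‖Q u‖ ^ 2 + ‖Q w‖ ^ 2 = ‖u‖ ^ 2) :
    0 ≤ iteratedFDeriv ℝ 2 (fun w => √(‖P w‖ ^ 2 * ‖Q w‖ ^ 2)) z ![u, u]
      + iteratedFDeriv ℝ 2 (fun w => √(‖P w‖ ^ 2 * ‖Q w‖ ^ 2)) z ![w, w] := by
  have hH := ((hasHessianAt_norm_sq_comp P z).mul (hasHessianAt_norm_sq_comp Q z)).sqrt
    (by positivity)
  rw [hH.iteratedFDeriv_two_apply, hH.iteratedFDeriv_two_apply]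
  have hCS := sq_add_sq_le_of_inner_nonneg (P z) (Q z) u w hPQ huw hw
  rw [← hP z u, ← hP z w, ← hQ z u, ← hQ z w] at hCS
  have ha : 0 < ‖P z‖ := norm_pos_iff.2 hPz
  have hb : 0 < ‖Q z‖ := norm_pos_iff.2 hQz
  -- The quotient in `key` is the Levi form: the mixed terms of the Hessian of the product
  -- turn the squares `(b ⟪P z, P u⟫ + a ⟪Q z, Q u⟫)²` from the square root into
  -- `(b ⟪P z, P u⟫ - a ⟪Q z, Q u⟫)²`.
  have key : 0 ≤ (‖P z‖ ^ 2 * ‖Q z‖ ^ 2 * (‖P z‖ ^ 2 * (‖Q u‖ ^ 2 + ‖Q w‖ ^ 2)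
      + ‖Q z‖ ^ 2 * (‖P u‖ ^ 2 + ‖P w‖ ^ 2))
      - (‖Q z‖ ^ 2 * ⟪P z, P u⟫ - ‖P z‖ ^ 2 * ⟪Q z, Q u⟫) ^ 2
      - (‖Q z‖ ^ 2 * ⟪P z, P w⟫ - ‖P z‖ ^ 2 * ⟪Q z, Q w⟫) ^ 2) / (‖P z‖ * ‖Q z‖) ^ 3 := by
    rw [hPuw, hQuw]
    exact div_nonneg (by linarith) (by positivity)
  have hs : √(‖P z‖ ^ 2 * ‖Q z‖ ^ 2) = ‖P z‖ * ‖Q z‖ := by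
    rw [← mul_pow, Real.sqrt_sq (by positivity)]
  convert key using 1
  simp only [hs, sub_apply, add_apply, smul_apply, smulRight_apply, bilinearComp_apply,
    coe_innerSL_apply, real_inner_self_eq_norm_sq, smul_eq_mul]
  field_simp
  ring

end InnerProductSpace

section AxisProjection

variable {n : ℕ}

theorem Cn.real_inner_apply (x y : Cn n) :
    ⟪x, y⟫ = ∑ i, ((x i).re * (y i).re + (x i).im * (y i).im) := by
  simp only [PiLp.inner_apply, Complex.inner, mul_re, conj_re, conj_im]
  exact Finset.sum_congr rfl fun i _ => by ring

theorem Cn.norm_sq_eq (x : Cn n) : ‖x‖ ^ 2 = ∑ i, ((x i).re ^ 2 + (x i).im ^ 2) := by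
  rw [← real_inner_self_eq_norm_sq, Cn.real_inner_apply]
  simp only [sq]

theorem Cn.real_inner_I_smul_self (v : Cn n) : ⟪v, I • v⟫ = 0 := by
  simp only [Cn.real_inner_apply, PiLp.smul_apply, smul_eq_mul, mul_re, mul_im, I_re, I_im]
  exact Finset.sum_eq_zero fun i _ => by ring

variable (p : Fin n → Prop) [DecidablePred p]

def axisProj : Cn n →L[ℝ] Cn n := LinearMap.toContinuousLinearMap
  { toFun := fun w => WithLp.toLp 2 fun i => if p i then ((w i).re : ℂ) else (w i).im * I
    map_add' := fun x y => by ext i; by_cases h : p i <;> simp [h, add_mul]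
    map_smul' := fun c x => by ext i; by_cases h : p i <;> simp [h, mul_assoc] }

theorem axisProj_apply (w : Cn n) (i : Fin n) :
    axisProj p w i = if p i then ((w i).re : ℂ) else (w i).im * I :=
  rfl

theorem axisProj_re (w : Cn n) (i : Fin n) :
    (axisProj p w i).re = if p i then (w i).re else 0 := by
  rw [axisProj_apply]; split_ifs <;> simp

theorem axisProj_im (w : Cn n) (i : Fin n) :
    (axisProj p w i).im = if p i then 0 else (w i).im := by
  rw [axisProj_apply]; split_ifs <;> simp

theorem inner_axisProj_axisProj (u v : Cn n) :
    ⟪axisProj p u, axisProj p v⟫ = ⟪axisProj p u, v⟫ := by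
  simp only [Cn.real_inner_apply, axisProj_re, axisProj_im]
  exact Finset.sum_congr rfl fun i _ => by split_ifs <;> ring

theorem norm_sq_axisProj (w : Cn n) :
    ‖axisProj p w‖ ^ 2 = ∑ i, if p i then (w i).re ^ 2 else (w i).im ^ 2 := by
  simp only [Cn.norm_sq_eq, axisProj_re, axisProj_im]
  exact Finset.sum_congr rfl fun i _ => by split_ifs <;> ring

theorem norm_sq_axisProj_add_norm_sq_axisProj_I_smul (v : Cn n) :
    ‖axisProj p v‖ ^ 2 + ‖axisProj p (I • v)‖ ^ 2 = ‖v‖ ^ 2 := by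
  rw [norm_sq_axisProj, norm_sq_axisProj, Cn.norm_sq_eq, ← Finset.sum_add_distrib]
  refine Finset.sum_congr rfl fun i _ => ?_
  simp only [PiLp.smul_apply, smul_eq_mul, mul_re, mul_im, I_re, I_im]
  split_ifs <;> ring

theorem inner_axisProj_nonneg (q : Fin n → Prop) [DecidablePred q] (u : Cn n) :
    0 ≤ ⟪axisProj p u, axisProj q u⟫ := by
  simp only [Cn.real_inner_apply, axisProj_re, axisProj_im]
  exact Finset.sum_nonneg fun i _ => by
    split_ifs <;> nlinarith [mul_self_nonneg (u i).re, mul_self_nonneg (u i).im]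

end AxisProjection

theorem alph_eq_norm_sq_axisProj (n : ℕ) (w : Cn n) :
    alph n w = ‖axisProj (fun _ => True) w‖ ^ 2 := by
  simp [alph, norm_sq_axisProj]

theorem bet_eq_norm_sq_axisProj (n k : ℕ) (w : Cn n) :
    bet n k w = ‖axisProj (fun i : Fin n => (i : ℕ) < k) w‖ ^ 2 :=
  (norm_sq_axisProj _ w).symm

theorem sqrt_product_weakly_psh_general (n k : ℕ) (z : Cn n)
    (h1 : alph n z ≠ 0) (h2 : bet n k z ≠ 0) (v : Cn n) :
    0 ≤ levi n (fun w => Real.sqrt (alph n w * bet n k w)) z v := by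
  simp only [alph_eq_norm_sq_axisProj, bet_eq_norm_sq_axisProj] at h1 h2 ⊢
  exact levi_sqrt_mul_norm_sq_nonneg _ _ (inner_axisProj_axisProj _) (inner_axisProj_axisProj _)
    (by simpa using h1) (by simpa using h2) (inner_axisProj_nonneg _ _ z)
    (Cn.real_inner_I_smul_self v) (by rw [norm_smul, norm_I, one_mul])
    (norm_sq_axisProj_add_norm_sq_axisProj_I_smul _ v)
    (norm_sq_axisProj_add_norm_sq_axisProj_I_smul _ v)

/-- √(αβ) is weakly plurisubharmonic on ℂⁿ ∖ (L₁ ∪ L₂),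
where L₁ = {α = 0} and L₂ = {β = 0}. -/
theorem sqrt_product_weakly_psh (n k : ℕ) (hk : k ≤ n) (z : Cn n)
    (h1 : alph n z ≠ 0) (h2 : bet n k z ≠ 0) (v : Cn n) :
    0 ≤ levi n (fun w => Real.sqrt (alph n w * bet n k w)) z v :=
  sqrt_product_weakly_psh_general n k z h1 h2 v
end
end

section
/- In the case k = 0 (transverse Lagrangians ℝⁿ and iℝⁿ in ℂⁿ), the function f(x,y) = |x|·|y| is weakly plurisubharmonic on ℂⁿ ∖ ({x=0} ∪ {y=0}). -/
/-!
Write `z = x + iy` and `v = a + ib`, so that `iv = -b + ia`. Adding the Hessians of `|x||y|` in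
the directions `v` and `iv` and multiplying by `|x||y|` gives
`(|x|² + |y|²)(|a|² + |b|²) - |⟪p - iq, a + ib⟫|²` with `p = (|y|/|x|) x` and `q = (|x|/|y|) y`.
As `p`, `q` are real, `|p - iq|² = |x|² + |y|²`, so this is nonnegative by Cauchy–Schwarz in `ℂⁿ`.
-/

noncomputable section

open scoped RealInnerProductSpace Topology

section
variable {V E : Type*} [NormedAddCommGroup V] [NormedSpace ℝ V]
  [NormedAddCommGroup E] [InnerProductSpace ℝ E]

theorem fderiv_fderiv_mul_apply {g h : V → ℝ} {z : V} (hg : ContDiffAt ℝ 2 g z)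
    (hh : ContDiffAt ℝ 2 h z) (u v : V) :
    fderiv ℝ (fderiv ℝ fun w => g w * h w) z u v =
      fderiv ℝ (fderiv ℝ g) z u v * h z + fderiv ℝ g z u * fderiv ℝ h z v
        + fderiv ℝ g z v * fderiv ℝ h z u + g z * fderiv ℝ (fderiv ℝ h) z u v := by
  have hderiv : fderiv ℝ (fun w => g w * h w) =ᶠ[𝓝 z]
      fun w => g w • fderiv ℝ h w + h w • fderiv ℝ g w := by
    filter_upwards [hg.eventually (by simp), hh.eventually (by simp)] with w hgw hhw
    exact fderiv_mul (hgw.differentiableAt two_ne_zero) (hhw.differentiableAt two_ne_zero)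
  have hg' := (hg.fderiv_right_succ (n := 1)).differentiableAt one_ne_zero
  have hh' := (hh.fderiv_right_succ (n := 1)).differentiableAt one_ne_zero
  have hsum := ((hg.differentiableAt two_ne_zero).hasFDerivAt.fun_smul hh'.hasFDerivAt).fun_add
    ((hh.differentiableAt two_ne_zero).hasFDerivAt.fun_smul hg'.hasFDerivAt)
  rw [hderiv.fderiv_eq, hsum.fderiv]
  simp only [add_apply, smul_apply, ContinuousLinearMap.smulRight_apply, smul_eq_mul]
  ring

theorem hasFDerivAt_norm {x : E} (hx : x ≠ 0) :
    HasFDerivAt (‖·‖) (‖x‖⁻¹ • innerSL ℝ x) x := by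
  have h := (hasStrictFDerivAt_norm_sq x).hasFDerivAt.sqrt
    (pow_ne_zero 2 (norm_ne_zero_iff.2 hx))
  simp only [Real.sqrt_sq (norm_nonneg _)] at h
  convert h using 1
  ext v
  simp only [smul_apply, innerSL_apply_apply, smul_eq_mul, nsmul_eq_mul, Nat.cast_ofNat]
  field_simp

theorem hasFDerivAt_norm_comp (X : V →L[ℝ] E) {w : V} (hw : X w ≠ 0) :
    HasFDerivAt (fun w => ‖X w‖) (‖X w‖⁻¹ • (innerSL ℝ (X w)).comp X) w :=
  (hasFDerivAt_norm hw).comp w X.hasFDerivAt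

theorem fderiv_norm_comp_apply (X : V →L[ℝ] E) {z : V} (hz : X z ≠ 0) (u : V) :
    fderiv ℝ (fun w => ‖X w‖) z u = ‖X z‖⁻¹ * ⟪X z, X u⟫ := by
  simp [(hasFDerivAt_norm_comp X hz).fderiv]

theorem contDiffAt_norm_comp (X : V →L[ℝ] E) {z : V} (hz : X z ≠ 0) {n : WithTop ℕ∞} :
    ContDiffAt ℝ n (fun w => ‖X w‖) z :=
  X.contDiff.contDiffAt.norm ℝ hz

theorem fderiv_fderiv_norm_comp_apply (X : V →L[ℝ] E) {z : V} (hz : X z ≠ 0) (u v : V) :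
    fderiv ℝ (fderiv ℝ fun w => ‖X w‖) z u v =
      ‖X z‖⁻¹ * ⟪X u, X v⟫ - ‖X z‖⁻¹ ^ 3 * ⟪X z, X u⟫ * ⟪X z, X v⟫ := by
  have hderiv : fderiv ℝ (fun w => ‖X w‖) =ᶠ[𝓝 z]
      fun w => ‖X w‖⁻¹ • (innerSL ℝ (X w)).comp X := by
    filter_upwards [(X.continuous.isOpen_preimage _ isOpen_ne).mem_nhds hz] with w hw
    exact (hasFDerivAt_norm_comp X hw).fderiv
  have hinv : HasFDerivAt (fun w => ‖X w‖⁻¹)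
      (-(‖X z‖ ^ 2)⁻¹ • ‖X z‖⁻¹ • (innerSL ℝ (X z)).comp X) z :=
    (hasDerivAt_inv (norm_ne_zero_iff.2 hz)).comp_hasFDerivAt z (hasFDerivAt_norm_comp X hz)
  have hinner : HasFDerivAt (fun w => (innerSL ℝ (X w)).comp X)
      ((ContinuousLinearMap.compL ℝ V E ℝ).flip X ∘L innerSL ℝ ∘L X) z := by
    simpa using ((innerSL ℝ).hasFDerivAt.comp z X.hasFDerivAt).clm_comp (hasFDerivAt_const X z)
  rw [hderiv.fderiv_eq, (hinv.fun_smul hinner).fderiv]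
  simp only [neg_smul, add_apply, smul_apply,
    ContinuousLinearMap.comp_apply, ContinuousLinearMap.flip_apply,
    ContinuousLinearMap.compL_apply, ContinuousLinearMap.smulRight_apply,
    neg_apply, innerSL_apply_apply, smul_eq_mul]
  change ‖X z‖⁻¹ * ⟪X u, X v⟫ + _ = _
  ring

/-- Cauchy–Schwarz for `p - i q` and `a + i b` in the complexification of `E`. -/
theorem inner_sub_inner_sq_add_sq_le (p q a b : E) :
    (⟪p, a⟫ - ⟪q, b⟫) ^ 2 + (⟪p, b⟫ + ⟪q, a⟫) ^ 2 ≤ (‖p‖ ^ 2 + ‖q‖ ^ 2) * (‖a‖ ^ 2 + ‖b‖ ^ 2) := by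
  set s := ⟪p, a⟫ - ⟪q, b⟫
  set t := ⟪p, b⟫ + ⟪q, a⟫
  -- `s ^ 2 + t ^ 2` is an inner product of `(p, q)` with a vector of `E × E` of norm
  -- `√(s ^ 2 + t ^ 2) * √(‖a‖ ^ 2 + ‖b‖ ^ 2)`.
  have hst : s ^ 2 + t ^ 2 = ⟪p, s • a + t • b⟫ + ⟪q, t • a - s • b⟫ := by
    simp only [inner_add_right, inner_sub_right, real_inner_smul_right, s, t]
    ring
  have hnorm : ‖s • a + t • b‖ ^ 2 + ‖t • a - s • b‖ ^ 2 =
      (s ^ 2 + t ^ 2) * (‖a‖ ^ 2 + ‖b‖ ^ 2) := by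
    simp only [norm_add_sq_real, norm_sub_sq_real, norm_smul, real_inner_smul_left,
      real_inner_smul_right, mul_pow, Real.norm_eq_abs, sq_abs]
    ring
  have hCS : s ^ 2 + t ^ 2 ≤ ‖p‖ * ‖s • a + t • b‖ + ‖q‖ * ‖t • a - s • b‖ :=
    hst ▸ add_le_add (real_inner_le_norm _ _) (real_inner_le_norm _ _)
  have hCS2 : (‖p‖ * ‖s • a + t • b‖ + ‖q‖ * ‖t • a - s • b‖) ^ 2 ≤
      (‖p‖ ^ 2 + ‖q‖ ^ 2) * (‖s • a + t • b‖ ^ 2 + ‖t • a - s • b‖ ^ 2) := by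
    nlinarith [sq_nonneg (‖p‖ * ‖t • a - s • b‖ - ‖q‖ * ‖s • a + t • b‖)]
  rw [hnorm] at hCS2
  have hm : (s ^ 2 + t ^ 2) * (s ^ 2 + t ^ 2) ≤
      (s ^ 2 + t ^ 2) * ((‖p‖ ^ 2 + ‖q‖ ^ 2) * (‖a‖ ^ 2 + ‖b‖ ^ 2)) := by
    nlinarith [pow_le_pow_left₀ (by positivity) hCS 2]
  rcases (add_nonneg (sq_nonneg s) (sq_nonneg t)).eq_or_lt with h0 | hpos
  · rw [← h0]
    positivity
  · exact le_of_mul_le_mul_left hm hpos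

theorem fderiv_fderiv_norm_mul_norm_apply (X Y : V →L[ℝ] E) {z : V} (hx : X z ≠ 0)
    (hy : Y z ≠ 0) (u v : V) :
    fderiv ℝ (fderiv ℝ fun w => ‖X w‖ * ‖Y w‖) z u v =
      (‖X z‖⁻¹ * ⟪X u, X v⟫ - ‖X z‖⁻¹ ^ 3 * ⟪X z, X u⟫ * ⟪X z, X v⟫) * ‖Y z‖
        + ‖X z‖⁻¹ * ⟪X z, X u⟫ * (‖Y z‖⁻¹ * ⟪Y z, Y v⟫)
        + ‖X z‖⁻¹ * ⟪X z, X v⟫ * (‖Y z‖⁻¹ * ⟪Y z, Y u⟫)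
        + ‖X z‖ * (‖Y z‖⁻¹ * ⟪Y u, Y v⟫ - ‖Y z‖⁻¹ ^ 3 * ⟪Y z, Y u⟫ * ⟪Y z, Y v⟫) := by
  rw [fderiv_fderiv_mul_apply (contDiffAt_norm_comp X hx) (contDiffAt_norm_comp Y hy),
    fderiv_fderiv_norm_comp_apply X hx, fderiv_fderiv_norm_comp_apply Y hy,
    fderiv_norm_comp_apply X hx, fderiv_norm_comp_apply X hx,
    fderiv_norm_comp_apply Y hy, fderiv_norm_comp_apply Y hy]

theorem fderiv_fderiv_norm_mul_norm_add_rotate_nonneg (X Y : V →L[ℝ] E) {z : V}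
    (hx : X z ≠ 0) (hy : Y z ≠ 0) {u u' : V} (hXu' : X u' = -Y u) (hYu' : Y u' = X u) :
    0 ≤ fderiv ℝ (fderiv ℝ fun w => ‖X w‖ * ‖Y w‖) z u u
      + fderiv ℝ (fderiv ℝ fun w => ‖X w‖ * ‖Y w‖) z u' u' := by
  rw [fderiv_fderiv_norm_mul_norm_apply X Y hx hy, fderiv_fderiv_norm_mul_norm_apply X Y hx hy,
    hXu', hYu']
  have hP : 0 < ‖X z‖ := norm_pos_iff.2 hx
  have hQ : 0 < ‖Y z‖ := norm_pos_iff.2 hy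
  have key := inner_sub_inner_sq_add_sq_le ((‖Y z‖ / ‖X z‖) • X z) ((‖X z‖ / ‖Y z‖) • Y z)
    (X u) (Y u)
  simp only [real_inner_smul_left, norm_smul, inner_neg_left, inner_neg_right, neg_neg,
    real_inner_self_eq_norm_sq, Real.norm_eq_abs, abs_div, abs_norm] at key ⊢
  -- `‖X z‖ * ‖Y z‖` times the sum is the Cauchy–Schwarz defect in `key`.
  rw [← mul_nonneg_iff_of_pos_left (mul_pos hP hQ)]
  field_simp at key ⊢
  linarith [key]

end

namespace Cn

def reCLM (n : ℕ) : Cn n →L[ℝ] EuclideanSpace ℝ (Fin n) :=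
  (EuclideanSpace.equiv (Fin n) ℝ).symm.toContinuousLinearMap ∘L
    .pi fun i => Complex.reCLM ∘L (EuclideanSpace.proj i).restrictScalars ℝ

def imCLM (n : ℕ) : Cn n →L[ℝ] EuclideanSpace ℝ (Fin n) :=
  (EuclideanSpace.equiv (Fin n) ℝ).symm.toContinuousLinearMap ∘L
    .pi fun i => Complex.imCLM ∘L (EuclideanSpace.proj i).restrictScalars ℝ

@[simp] theorem reCLM_apply {n : ℕ} (w : Cn n) (i : Fin n) : reCLM n w i = (w i).re := rfl

@[simp] theorem imCLM_apply {n : ℕ} (w : Cn n) (i : Fin n) : imCLM n w i = (w i).im := rfl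

theorem norm_reCLM {n : ℕ} (w : Cn n) : ‖reCLM n w‖ = √(∑ i, (w i).re ^ 2) := by
  simp [EuclideanSpace.norm_eq]

theorem norm_imCLM {n : ℕ} (w : Cn n) : ‖imCLM n w‖ = √(∑ i, (w i).im ^ 2) := by
  simp [EuclideanSpace.norm_eq]

theorem reCLM_I_smul {n : ℕ} (v : Cn n) : reCLM n (Complex.I • v) = -imCLM n v := by
  ext i
  simp

theorem imCLM_I_smul {n : ℕ} (v : Cn n) : imCLM n (Complex.I • v) = reCLM n v := by
  ext i
  simp

end Cn

/-- (k = 0 case) f(x,y) = |x|·|y| is weakly plurisubharmonic off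
{x = 0} ∪ {y = 0}. -/
theorem normprod_weakly_psh (n : ℕ) (z : Cn n)
    (h1 : (∑ i, (z i).re ^ 2) ≠ 0) (h2 : (∑ i, (z i).im ^ 2) ≠ 0) (v : Cn n) :
    0 ≤ levi n
      (fun w => Real.sqrt (∑ i, (w i).re ^ 2) * Real.sqrt (∑ i, (w i).im ^ 2)) z v := by
  have hre : Cn.reCLM n z ≠ 0 := by
    rw [← norm_ne_zero_iff, Cn.norm_reCLM, Real.sqrt_ne_zero']
    exact (Finset.sum_nonneg fun i _ => sq_nonneg _).lt_of_ne' h1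
  have him : Cn.imCLM n z ≠ 0 := by
    rw [← norm_ne_zero_iff, Cn.norm_imCLM, Real.sqrt_ne_zero']
    exact (Finset.sum_nonneg fun i _ => sq_nonneg _).lt_of_ne' h2
  simp only [levi, iteratedFDeriv_two_apply, Matrix.cons_val_zero, Matrix.cons_val_one,
    ← Cn.norm_reCLM, ← Cn.norm_imCLM]
  exact fderiv_fderiv_norm_mul_norm_add_rotate_nonneg _ _ hre him (Cn.reCLM_I_smul v)
    (Cn.imCLM_I_smul v)
end
end

section
/- Let f = √(αβ) with α = Σ_{i=1}^n x_i², β = Σ_{i=1}^k x_i² + Σ_{i=k+1}^n y_i², and v₁ = Σ_i (α y_i δ_{i>k} ∂/∂x_i − (β + α δ_{i≤k}) x_i ∂/∂y_i). Then the matrix M₁ of the form (df ∧ d^c f)(·, i·) in the standard basis of ℝ²ⁿ satisfies M₁ v₁ = (2Σ_{i≤k} x_i² + α + β) v₁, M₁ (J₀v₁) = (2Σ_{i≤k} x_i² + α + β) J₀v₁, and M₁ v = 0 for every v orthogonal to both v₁ and J₀v₁. -/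
noncomputable section

/-- Σ_{i ≤ k} xᵢ² (0-based: i < k). -/
def sxk (n k : ℕ) (z : Cn n) : ℝ := ∑ i : Fin n, if (i : ℕ) < k then (z i).re ^ 2 else 0

/-- v₀ = Σᵢ (α yᵢ δ_{i>k} ∂/∂xᵢ + (β − α δ_{i≤k}) xᵢ ∂/∂yᵢ), as a vector of ℂⁿ = ℝ²ⁿ. -/
def v0 (n k : ℕ) (z : Cn n) : Cn n :=
  (EuclideanSpace.equiv (Fin n) ℂ).symm fun i =>
    ((if k ≤ (i : ℕ) then alph n z * (z i).im else 0 : ℝ) : ℂ) +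
      (((bet n k z - if (i : ℕ) < k then alph n z else 0) * (z i).re : ℝ) : ℂ) * Complex.I

/-- v₁ = Σᵢ (α yᵢ δ_{i>k} ∂/∂xᵢ − (β + α δ_{i≤k}) xᵢ ∂/∂yᵢ). -/
def v1 (n k : ℕ) (z : Cn n) : Cn n :=
  (EuclideanSpace.equiv (Fin n) ℂ).symm fun i =>
    ((if k ≤ (i : ℕ) then alph n z * (z i).im else 0 : ℝ) : ℂ) -
      (((bet n k z + if (i : ℕ) < k then alph n z else 0) * (z i).re : ℝ) : ℂ) * Complex.I
/-- The symmetric bilinear form (df ∧ d^c f)(·, i·)(v,w)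
    = df(v)df(w) + df(iv)df(iw), whose matrix is M₁. -/
def gradForm (n : ℕ) (f : Cn n → ℝ) (z v w : Cn n) : ℝ :=
  fderiv ℝ f z v * fderiv ℝ f z w +
    fderiv ℝ f z (Complex.I • v) * fderiv ℝ f z (Complex.I • w)

/-! Since `∇(αβ) = 2 J₀v₁`, the differential of `f = √(αβ)` is `df = ⟨J₀v₁, ·⟩ / f`. As `J₀` is
orthogonal with `J₀² = -1`, the form `df(v) df(w) + df(J₀v) df(J₀w)` is
`(⟨v₁, v⟩⟨v₁, w⟩ + ⟨J₀v₁, v⟩⟨J₀v₁, w⟩) / (αβ)`, with `v₁ ⊥ J₀v₁`: it has the eigenvalue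
`|v₁|² / (αβ) = 2 Σ_{i≤k} xᵢ² + α + β` on their span and vanishes on its orthogonal complement. -/

open scoped RealInnerProductSpace

section WedgeForm

variable {E : Type*} [NormedAddCommGroup E] [InnerProductSpace ℝ E]

/-- The form `(L ∧ L ∘ J)(v, J w)`; for `L = df` and `J = J₀` this is `gradForm`. -/
def wedgeForm (J : E → E) (L : E → ℝ) (v w : E) : ℝ :=
  L v * L w + L (J v) * L (J w)

variable {J : E → E}

lemma real_inner_apply_self_eq_zero (hJ : ∀ x y, ⟪J x, J y⟫ = ⟪x, y⟫)
    (hJJ : ∀ x, J (J x) = -x) (x : E) : ⟪J x, x⟫ = 0 := by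
  have h := hJ (J x) x
  rw [hJJ, inner_neg_left, real_inner_comm] at h
  linarith

variable {L : E → ℝ} {c : ℝ} {u : E}

lemma wedgeForm_self_left (hJ : ∀ x y, ⟪J x, J y⟫ = ⟪x, y⟫) (hJJ : ∀ x, J (J x) = -x)
    (hL : ∀ v, L v = c * ⟪J u, v⟫) (w : E) :
    wedgeForm J L u w = c ^ 2 * ⟪u, u⟫ * ⟪u, w⟫ := by
  simp only [wedgeForm, hL, hJ, real_inner_apply_self_eq_zero hJ hJJ]
  ring

lemma wedgeForm_apply_left (hJ : ∀ x y, ⟪J x, J y⟫ = ⟪x, y⟫) (hJJ : ∀ x, J (J x) = -x)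
    (hL : ∀ v, L v = c * ⟪J u, v⟫) (w : E) :
    wedgeForm J L (J u) w = c ^ 2 * ⟪u, u⟫ * ⟪J u, w⟫ := by
  simp only [wedgeForm, hL, hJ, hJJ, inner_neg_right, real_inner_apply_self_eq_zero hJ hJJ]
  ring

lemma wedgeForm_eq_zero_of_orthogonal (hJ : ∀ x y, ⟪J x, J y⟫ = ⟪x, y⟫)
    (hL : ∀ v, L v = c * ⟪J u, v⟫) {v : E} (hu : ⟪v, u⟫ = 0) (hJu : ⟪v, J u⟫ = 0) (w : E) :
    wedgeForm J L v w = 0 := by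
  simp only [wedgeForm, hL, hJ, real_inner_comm v, hu, hJu]
  ring

end WedgeForm

lemma hasFDerivAt_sum_sq_s6 {E ι : Type*} [NormedAddCommGroup E] [NormedSpace ℝ E] [Fintype ι]
    (ℓ : ι → StrongDual ℝ E) (z : E) :
    HasFDerivAt (fun q => ∑ i, ℓ i q ^ 2) (∑ i, (2 * ℓ i z) • ℓ i) z :=
  HasFDerivAt.fun_sum fun i _ =>
    ((ℓ i).hasFDerivAt.pow 2).congr_fderiv (by norm_num)

namespace Cn

variable {n : ℕ}

def re (i : Fin n) : StrongDual ℝ (Cn n) :=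
  Complex.reCLM.comp ((EuclideanSpace.proj i : Cn n →L[ℂ] ℂ).restrictScalars ℝ)

def im (i : Fin n) : StrongDual ℝ (Cn n) :=
  Complex.imCLM.comp ((EuclideanSpace.proj i : Cn n →L[ℂ] ℂ).restrictScalars ℝ)

@[simp] lemma re_apply (i : Fin n) (v : Cn n) : re i v = (v i).re := rfl
@[simp] lemma im_apply (i : Fin n) (v : Cn n) : im i v = (v i).im := rfl

lemma real_inner_eq_sum (u v : Cn n) :
    ⟪u, v⟫ = ∑ i, ((u i).re * (v i).re + (u i).im * (v i).im) := by
  simp only [PiLp.inner_apply, Complex.inner, Complex.mul_re, Complex.conj_re, Complex.conj_im]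
  exact Finset.sum_congr rfl fun i _ => by ring

lemma real_inner_I_smul_I_smul (u v : Cn n) :
    ⟪Complex.I • u, Complex.I • v⟫ = ⟪u, v⟫ := by
  simp only [real_inner_eq_sum, PiLp.smul_apply, smul_eq_mul, Complex.I_mul_re,
    Complex.I_mul_im]
  exact Finset.sum_congr rfl fun i _ => by ring

lemma real_inner_I_smul_left (u v : Cn n) :
    ⟪Complex.I • u, v⟫ = ∑ i, ((u i).re * (v i).im - (u i).im * (v i).re) := by
  simp only [real_inner_eq_sum, PiLp.smul_apply, smul_eq_mul, Complex.I_mul_re,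
    Complex.I_mul_im]
  exact Finset.sum_congr rfl fun i _ => by ring

lemma I_smul_I_smul (v : Cn n) : Complex.I • Complex.I • v = -v := by
  rw [smul_smul, Complex.I_mul_I, neg_one_smul]

end Cn

section

variable {n k : ℕ}

lemma alph_eq_sum (z : Cn n) : alph n z = ∑ i, Cn.re i z ^ 2 := rfl

lemma bet_eq_sum (z : Cn n) :
    bet n k z = ∑ i : Fin n, (if (i : ℕ) < k then Cn.re i else Cn.im i) z ^ 2 := by
  simp only [bet, apply_ite (fun ℓ : StrongDual ℝ (Cn n) => ℓ z ^ 2), Cn.re_apply, Cn.im_apply]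

lemma re_v1_apply (z : Cn n) (i : Fin n) :
    (v1 n k z i).re = if k ≤ (i : ℕ) then alph n z * (z i).im else 0 := by
  simp [v1]

lemma im_v1_apply (z : Cn n) (i : Fin n) :
    (v1 n k z i).im = -((bet n k z + if (i : ℕ) < k then alph n z else 0) * (z i).re) := by
  simp [v1]

lemma alph_nonneg (z : Cn n) : 0 ≤ alph n z :=
  Finset.sum_nonneg fun _ _ => sq_nonneg _

lemma bet_nonneg (z : Cn n) : 0 ≤ bet n k z :=
  (bet_eq_sum z).ge.trans' (Finset.sum_nonneg fun _ _ => sq_nonneg _)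

lemma hasFDerivAt_alph_mul_bet (z : Cn n) :
    HasFDerivAt (fun q => alph n q * bet n k q)
      ((2 : ℝ) • innerSL ℝ (Complex.I • v1 n k z)) z := by
  have hα := hasFDerivAt_sum_sq_s6 (Cn.re (n := n)) z
  have hβ := hasFDerivAt_sum_sq_s6 (fun i : Fin n => if (i : ℕ) < k then Cn.re i else Cn.im i) z
  simp only [← alph_eq_sum, ← bet_eq_sum] at hα hβ
  refine (hα.mul hβ).congr_fderiv (ContinuousLinearMap.ext fun v => ?_)
  simp only [add_apply, smul_apply, sum_apply, innerSL_apply_apply, Cn.real_inner_I_smul_left,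
    re_v1_apply, im_v1_apply, apply_ite (fun ℓ : StrongDual ℝ (Cn n) => ℓ z),
    apply_ite (fun ℓ : StrongDual ℝ (Cn n) => ℓ v), Cn.re_apply, Cn.im_apply, smul_eq_mul,
    Finset.mul_sum, ← Finset.sum_add_distrib]
  refine Finset.sum_congr rfl fun i _ => ?_
  split_ifs <;> first | omega | ring

lemma fderiv_sqrt_alph_mul_bet_apply {z : Cn n} (h : alph n z * bet n k z ≠ 0) (v : Cn n) :
    fderiv ℝ (fun q => Real.sqrt (alph n q * bet n k q)) z v =
      (Real.sqrt (alph n z * bet n k z))⁻¹ * ⟪Complex.I • v1 n k z, v⟫ := by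
  rw [((hasFDerivAt_alph_mul_bet z).sqrt h).fderiv]
  simp only [smul_apply, innerSL_apply_apply, smul_eq_mul]
  ring

lemma real_inner_v1_self (z : Cn n) :
    ⟪v1 n k z, v1 n k z⟫ = alph n z * bet n k z * (2 * sxk n k z + alph n z + bet n k z) := by
  have hterm : ∀ i : Fin n,
      (v1 n k z i).re * (v1 n k z i).re + (v1 n k z i).im * (v1 n k z i).im =
      alph n z ^ 2 * (if (i : ℕ) < k then (z i).re ^ 2 else (z i).im ^ 2) +
        bet n k z ^ 2 * (z i).re ^ 2 +
        2 * (alph n z * bet n k z) * (if (i : ℕ) < k then (z i).re ^ 2 else 0) := fun i => by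
    rw [re_v1_apply, im_v1_apply]
    split_ifs <;> first | omega | ring
  rw [Cn.real_inner_eq_sum, Finset.sum_congr rfl fun i _ => hterm i, Finset.sum_add_distrib,
    Finset.sum_add_distrib, ← Finset.mul_sum, ← Finset.mul_sum, ← Finset.mul_sum]
  change alph n z ^ 2 * bet n k z + bet n k z ^ 2 * alph n z +
    2 * (alph n z * bet n k z) * sxk n k z = _
  ring

end

theorem M1_eigenstructure_general (n k : ℕ) (z : Cn n)
    (h1 : alph n z ≠ 0) (h2 : bet n k z ≠ 0) :
    (∀ w : Cn n,
        gradForm n (fun q => Real.sqrt (alph n q * bet n k q)) z (v1 n k z) w =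
          (2 * sxk n k z + alph n z + bet n k z) * (inner ℝ (v1 n k z) w : ℝ)) ∧
    (∀ w : Cn n,
        gradForm n (fun q => Real.sqrt (alph n q * bet n k q)) z (Complex.I • v1 n k z) w =
          (2 * sxk n k z + alph n z + bet n k z) * (inner ℝ (Complex.I • v1 n k z) w : ℝ)) ∧
    (∀ v : Cn n, (inner ℝ v (v1 n k z) : ℝ) = 0 → (inner ℝ v (Complex.I • v1 n k z) : ℝ) = 0 →
        ∀ w : Cn n, gradForm n (fun q => Real.sqrt (alph n q * bet n k q)) z v w = 0) := by
  have hαβ : alph n z * bet n k z ≠ 0 := mul_ne_zero h1 h2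
  have hpos : 0 < alph n z * bet n k z :=
    (mul_nonneg (alph_nonneg z) (bet_nonneg z)).lt_of_ne' hαβ
  have hdf := fderiv_sqrt_alph_mul_bet_apply hαβ
  have heigen : (Real.sqrt (alph n z * bet n k z))⁻¹ ^ 2 * ⟪v1 n k z, v1 n k z⟫ =
      2 * sxk n k z + alph n z + bet n k z := by
    rw [inv_pow, Real.sq_sqrt hpos.le, real_inner_v1_self, inv_mul_cancel_left₀ hαβ]
  refine ⟨fun w => ?_, fun w => ?_, fun v hv hIv w => ?_⟩
  · rw [← heigen]
    exact wedgeForm_self_left Cn.real_inner_I_smul_I_smul Cn.I_smul_I_smul hdf w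
  · rw [← heigen]
    exact wedgeForm_apply_left Cn.real_inner_I_smul_I_smul Cn.I_smul_I_smul hdf w
  · exact wedgeForm_eq_zero_of_orthogonal Cn.real_inner_I_smul_I_smul hdf hv hIv w

/-- for f = √(αβ), off L₁ ∪ L₂, the matrix M₁ of (df ∧ d^c f)(·, i·)
has v₁ and J₀v₁ as eigenvectors with eigenvalue 2Σ_{i≤k}xᵢ² + α + β, and kills every
vector orthogonal to both. -/
theorem M1_eigenstructure (n k : ℕ) (hk : k ≤ n) (z : Cn n)
    (h1 : alph n z ≠ 0) (h2 : bet n k z ≠ 0) :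
    (∀ w : Cn n,
        gradForm n (fun q => Real.sqrt (alph n q * bet n k q)) z (v1 n k z) w =
          (2 * sxk n k z + alph n z + bet n k z) * (inner ℝ (v1 n k z) w : ℝ)) ∧
    (∀ w : Cn n,
        gradForm n (fun q => Real.sqrt (alph n q * bet n k q)) z (Complex.I • v1 n k z) w =
          (2 * sxk n k z + alph n z + bet n k z) * (inner ℝ (Complex.I • v1 n k z) w : ℝ)) ∧
    (∀ v : Cn n, (inner ℝ v (v1 n k z) : ℝ) = 0 → (inner ℝ v (Complex.I • v1 n k z) : ℝ) = 0 →
        ∀ w : Cn n, gradForm n (fun q => Real.sqrt (alph n q * bet n k q)) z v w = 0) :=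
  M1_eigenstructure_general n k z h1 h2
end
end

section
/- For n = 2, let ρ(x,y) = χ(x₁)·|y|² on ℂ² = ℝ²_x ⊕ iℝ²_y with χ smooth, nonnegative, convex. The determinant of the complex Hessian (Levi matrix) of ρ equals (1/16)(4χ² − 4y₂²(χ')² + 2|y|²χχ'') up to the paper's normalization; in particular at points with y₁ = 0, y₂ = 1 the Levi determinant is nonnegative only if 2χ(x₁)² + χ(x₁)χ''(x₁) ≥ 2(χ'(x₁))². -/
noncomputable section

abbrev C2 := EuclideanSpace ℂ (Fin 2)

/-- Real Hessian as a bilinear form. -/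
def Hess (f : C2 → ℝ) (z u w : C2) : ℝ := iteratedFDeriv ℝ 2 f z ![u, w]

/-- ∂/∂xᵢ. -/
def ex (i : Fin 2) : C2 := EuclideanSpace.single i (1 : ℂ)

/-- ∂/∂yᵢ. -/
def ey (i : Fin 2) : C2 := EuclideanSpace.single i Complex.I

/-- Real part of 4·(Levi matrix entry): 4·Re ∂²f/∂zᵢ∂z̄ⱼ = f_{xᵢxⱼ} + f_{yᵢyⱼ}. -/
def fourLre (f : C2 → ℝ) (z : C2) (i j : Fin 2) : ℝ :=
  Hess f z (ex i) (ex j) + Hess f z (ey i) (ey j)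

/-- Imaginary part of 4·(Levi matrix entry): 4·Im ∂²f/∂zᵢ∂z̄ⱼ = f_{xᵢyⱼ} − f_{yᵢxⱼ}. -/
def fourLim (f : C2 → ℝ) (z : C2) (i j : Fin 2) : ℝ :=
  Hess f z (ex i) (ey j) - Hess f z (ey i) (ex j)

/-- det(4L) for the 2×2 Hermitian Levi matrix L (whose diagonal entries are real). -/
def detFourL (f : C2 → ℝ) (z : C2) : ℝ :=
  fourLre f z 0 0 * fourLre f z 1 1 - (fourLre f z 0 1 ^ 2 + fourLim f z 0 1 ^ 2)

namespace LeviAux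

def Acl : C2 →L[ℝ] ℝ :=
  Complex.reCLM.comp ((EuclideanSpace.proj (0 : Fin 2) : C2 →L[ℂ] ℂ).restrictScalars ℝ)
def Bcl : C2 →L[ℝ] ℝ :=
  Complex.imCLM.comp ((EuclideanSpace.proj (0 : Fin 2) : C2 →L[ℂ] ℂ).restrictScalars ℝ)
def Ccl : C2 →L[ℝ] ℝ :=
  Complex.imCLM.comp ((EuclideanSpace.proj (1 : Fin 2) : C2 →L[ℂ] ℂ).restrictScalars ℝ)

@[simp] lemma Acl_apply (q : C2) : Acl q = (q 0).re := rfl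
@[simp] lemma Bcl_apply (q : C2) : Bcl q = (q 0).im := rfl
@[simp] lemma Ccl_apply (q : C2) : Ccl q = (q 1).im := rfl

variable {χ : ℝ → ℝ}

lemma derivχ_diff (hχ : ContDiff ℝ (⊤ : ℕ∞) χ) : Differentiable ℝ (deriv χ) :=
  (contDiff_infty_iff_deriv.mp (contDiff_infty_iff_deriv.mp (hχ.of_le (by simp))).2).1

lemma hasFDerivAt_f (hχ : ContDiff ℝ (⊤ : ℕ∞) χ) (z : C2) :
    HasFDerivAt (fun q : C2 => χ (q 0).re * ((q 0).im ^ 2 + (q 1).im ^ 2))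
      ((χ (Acl z)) • (((2 : ℝ) * Bcl z) • (Bcl : C2 →L[ℝ] ℝ) + ((2 : ℝ) * Ccl z) • Ccl)
        + ((Bcl z) ^ 2 + (Ccl z) ^ 2) • ((deriv χ (Acl z)) • (Acl : C2 →L[ℝ] ℝ))) z := by
  have hA : HasFDerivAt (fun q : C2 => χ (Acl q)) ((deriv χ (Acl z)) • (Acl : C2 →L[ℝ] ℝ)) z :=
    (hχ.differentiable (by simp) (Acl z)).hasDerivAt.comp_hasFDerivAt z Acl.hasFDerivAt
  have hB : HasFDerivAt (fun q : C2 => (Bcl q) ^ 2) (((2 : ℝ) * Bcl z) • (Bcl : C2 →L[ℝ] ℝ)) z := by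
    simpa [pow_two, two_mul, add_smul] using Bcl.hasFDerivAt.fun_mul Bcl.hasFDerivAt
  have hC : HasFDerivAt (fun q : C2 => (Ccl q) ^ 2) (((2 : ℝ) * Ccl z) • (Ccl : C2 →L[ℝ] ℝ)) z := by
    simpa [pow_two, two_mul, add_smul] using Ccl.hasFDerivAt.fun_mul Ccl.hasFDerivAt
  exact hA.mul (hB.add hC)

lemma fderiv_f_apply (hχ : ContDiff ℝ (⊤ : ℕ∞) χ) (z w : C2) :
    fderiv ℝ (fun q : C2 => χ (q 0).re * ((q 0).im ^ 2 + (q 1).im ^ 2)) z w =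
      deriv χ (z 0).re * ((z 0).im ^ 2 + (z 1).im ^ 2) * (w 0).re +
        2 * χ (z 0).re * ((z 0).im * (w 0).im + (z 1).im * (w 1).im) := by
  rw [(hasFDerivAt_f hχ z).fderiv]
  simp [ContinuousLinearMap.add_apply, ContinuousLinearMap.smul_apply]
  ring

lemma fderiv_g_apply (hχ : ContDiff ℝ (⊤ : ℕ∞) χ) (w z u : C2) :
    fderiv ℝ (fun q : C2 =>
        deriv χ (q 0).re * ((q 0).im ^ 2 + (q 1).im ^ 2) * (w 0).re +
          2 * χ (q 0).re * ((q 0).im * (w 0).im + (q 1).im * (w 1).im)) z u =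
      deriv (deriv χ) (z 0).re * ((z 0).im ^ 2 + (z 1).im ^ 2) * (u 0).re * (w 0).re +
        2 * deriv χ (z 0).re * ((z 0).im * (u 0).im + (z 1).im * (u 1).im) * (w 0).re +
        2 * deriv χ (z 0).re * (u 0).re * ((z 0).im * (w 0).im + (z 1).im * (w 1).im) +
        2 * χ (z 0).re * ((u 0).im * (w 0).im + (u 1).im * (w 1).im) := by
  have hA : HasFDerivAt (fun q : C2 => χ (Acl q)) ((deriv χ (Acl z)) • (Acl : C2 →L[ℝ] ℝ)) z :=
    (hχ.differentiable (by simp) (Acl z)).hasDerivAt.comp_hasFDerivAt z Acl.hasFDerivAt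
  have hA' : HasFDerivAt (fun q : C2 => deriv χ (Acl q))
      ((deriv (deriv χ) (Acl z)) • (Acl : C2 →L[ℝ] ℝ)) z :=
    (derivχ_diff hχ (Acl z)).hasDerivAt.comp_hasFDerivAt z Acl.hasFDerivAt
  have hB : HasFDerivAt (fun q : C2 => (Bcl q) ^ 2) (((2 : ℝ) * Bcl z) • (Bcl : C2 →L[ℝ] ℝ)) z := by
    simpa [pow_two, two_mul, add_smul] using Bcl.hasFDerivAt.fun_mul Bcl.hasFDerivAt
  have hC : HasFDerivAt (fun q : C2 => (Ccl q) ^ 2) (((2 : ℝ) * Ccl z) • (Ccl : C2 →L[ℝ] ℝ)) z := by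
    simpa [pow_two, two_mul, add_smul] using Ccl.hasFDerivAt.fun_mul Ccl.hasFDerivAt
  have hBw : HasFDerivAt (fun q : C2 => Bcl q * (w 0).im) (((w 0).im) • (Bcl : C2 →L[ℝ] ℝ)) z := by
    simpa [mul_comm] using Bcl.hasFDerivAt.mul_const (w 0).im
  have hCw : HasFDerivAt (fun q : C2 => Ccl q * (w 1).im) (((w 1).im) • (Ccl : C2 →L[ℝ] ℝ)) z := by
    simpa [mul_comm] using Ccl.hasFDerivAt.mul_const (w 1).im
  have h1 := ((hA'.fun_mul (hB.fun_add hC)).mul_const (w 0).re).fun_add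
    (((hasFDerivAt_const (2 : ℝ) z).fun_mul hA).fun_mul (hBw.fun_add hCw))
  have h2 : (fun q : C2 =>
        deriv χ (q 0).re * ((q 0).im ^ 2 + (q 1).im ^ 2) * (w 0).re +
          2 * χ (q 0).re * ((q 0).im * (w 0).im + (q 1).im * (w 1).im)) =
      (fun x : C2 => deriv χ (Acl x) * (Bcl x ^ 2 + Ccl x ^ 2) * (w 0).re +
          2 * χ (Acl x) * (Bcl x * (w 0).im + Ccl x * (w 1).im)) := rfl
  rw [h2, h1.fderiv]
  simp [ContinuousLinearMap.add_apply, ContinuousLinearMap.smul_apply]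
  ring

lemma hess_f (hχ : ContDiff ℝ (⊤ : ℕ∞) χ) (z u w : C2) :
    Hess (fun q : C2 => χ (q 0).re * ((q 0).im ^ 2 + (q 1).im ^ 2)) z u w =
      deriv (deriv χ) (z 0).re * ((z 0).im ^ 2 + (z 1).im ^ 2) * (u 0).re * (w 0).re +
        2 * deriv χ (z 0).re * ((z 0).im * (u 0).im + (z 1).im * (u 1).im) * (w 0).re +
        2 * deriv χ (z 0).re * (u 0).re * ((z 0).im * (w 0).im + (z 1).im * (w 1).im) +
        2 * χ (z 0).re * ((u 0).im * (w 0).im + (u 1).im * (w 1).im) := by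
  set f : C2 → ℝ := fun q => χ (q 0).re * ((q 0).im ^ 2 + (q 1).im ^ 2) with hf
  have hfC : ContDiff ℝ (⊤ : ℕ∞) f :=
    (hχ.comp Acl.contDiff).mul ((Bcl.contDiff.pow 2).add (Ccl.contDiff.pow 2))
  have hdiff : DifferentiableAt ℝ (fderiv ℝ f) z :=
    ((hfC.fderiv_right (m := 1) (by exact WithTop.coe_le_coe.mpr le_top)).differentiable one_ne_zero) z
  have h1 : fderiv ℝ (fun y => fderiv ℝ f y w) z u = fderiv ℝ (fderiv ℝ f) z u w := by
    rw [fderiv_clm_apply hdiff (differentiableAt_const w)]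
    simp
  have h2 : (fun y => fderiv ℝ f y w) = fun q : C2 =>
      deriv χ (q 0).re * ((q 0).im ^ 2 + (q 1).im ^ 2) * (w 0).re +
        2 * χ (q 0).re * ((q 0).im * (w 0).im + (q 1).im * (w 1).im) := by
    funext q; exact fderiv_f_apply hχ q w
  rw [Hess, iteratedFDeriv_two_apply]
  simp only [Matrix.cons_val_zero, Matrix.cons_val_one, Matrix.head_cons]
  rw [← h1, h2, fderiv_g_apply hχ w z u]

end LeviAux

/-- for ρ(x,y) = χ(x₁)|y|² on ℂ², det(4L) = 4χ² − 4y₂²(χ')² + 2|y|²χχ'';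
in particular at points with y₁ = 0, y₂ = 1, nonnegativity of the Levi determinant
forces 2χ² + χχ'' ≥ 2(χ')². -/
theorem levi_det_of_cutoff_model (χ : ℝ → ℝ) (hχ : ContDiff ℝ (⊤ : ℕ∞) χ)
    (hnn : ∀ t, 0 ≤ χ t) (hconv : ConvexOn ℝ Set.univ χ) :
    (∀ z : C2,
        detFourL (fun q => χ (q 0).re * ((q 0).im ^ 2 + (q 1).im ^ 2)) z =
          4 * χ (z 0).re ^ 2 - 4 * (z 1).im ^ 2 * deriv χ (z 0).re ^ 2 +
            2 * ((z 0).im ^ 2 + (z 1).im ^ 2) * χ (z 0).re * deriv (deriv χ) (z 0).re) ∧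
    (∀ z : C2, (z 0).im = 0 → (z 1).im = 1 →
        0 ≤ detFourL (fun q => χ (q 0).re * ((q 0).im ^ 2 + (q 1).im ^ 2)) z →
        2 * deriv χ (z 0).re ^ 2 ≤
          2 * χ (z 0).re ^ 2 + χ (z 0).re * deriv (deriv χ) (z 0).re) := by
  have main : ∀ z : C2,
      detFourL (fun q => χ (q 0).re * ((q 0).im ^ 2 + (q 1).im ^ 2)) z =
        4 * χ (z 0).re ^ 2 - 4 * (z 1).im ^ 2 * deriv χ (z 0).re ^ 2 +
          2 * ((z 0).im ^ 2 + (z 1).im ^ 2) * χ (z 0).re * deriv (deriv χ) (z 0).re := by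
    intro z
    simp only [detFourL, fourLre, fourLim, LeviAux.hess_f hχ]
    simp [ex, ey, EuclideanSpace.single_apply]
    ring
  refine ⟨main, fun z h0 h1 hd => ?_⟩
  rw [main z, h0, h1] at hd
  nlinarith [hd]
end
end
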